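/- There exists a primitive root g modulo 37 such that the cosets X_i = g^i·H (0 ≤ i < 4, indices mod 4) of the subgroup H of 4th-power residues in 𝔽_37^× satisfy: for all i, j, if j ≠ i+2 (mod 4) then X_i + X_j = 𝔽_37 ∖ {0}, and if j = i+2 (mod 4) then X_i + X_j = 𝔽_37. (This gives a finite representation of relation algebra 83_83, whose four diversity atoms are all flexible, over a base set of size 37.) -/

import Mathlib

/-!
Take `g = 2`. Since `g ^ 4 • H = H`, multiplication by `g ^ i` maps `X_k` onto `X_(i + k)` and fixes
both `𝔽_37 \ {0}` and `𝔽_37`, so `X_i + X_j = g ^ i • (X_0 + X_(j - i))` and only the four sumsets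
`X_0 + X_k` have to be computed. Zero lies in `X_0 + X_k` exactly when `-1 = 2 ^ 18 ∈ X_k`,
i.e. when `k ≡ 18 ≡ 2 (mod 4)`.
-/

open Pointwise

/-- The set of nonzero `n`-th power residues in `𝔽_p = ZMod p`. -/
def Hpow (p n : ℕ) : Set (ZMod p) := {x | ∃ u : (ZMod p)ˣ, (u : ZMod p) ^ n = x}

/-- The coset `X_i = g^i · H` of the subgroup of `n`-th power residues. -/
noncomputable def Xc (p n : ℕ) [Fact p.Prime] (g : ZMod p) (i : ℤ) : Set (ZMod p) :=
  g ^ i • Hpow p n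

instance : Fact (Nat.Prime 37) := ⟨by norm_num⟩

section Cosets

variable {p n : ℕ}

theorem pow_smul_Hpow {c : ZMod p} (hc : IsUnit c) : c ^ n • Hpow p n = Hpow p n := by
  obtain ⟨c, rfl⟩ := hc
  ext x
  rw [Set.mem_smul_set]
  constructor
  · rintro ⟨_, ⟨u, rfl⟩, rfl⟩
    exact ⟨c * u, by push_cast [smul_eq_mul]; ring⟩
  · rintro ⟨u, rfl⟩
    exact ⟨((c⁻¹ * u : (ZMod p)ˣ) : ZMod p) ^ n, ⟨c⁻¹ * u, rfl⟩, by
      push_cast [smul_eq_mul]; rw [← mul_pow, ← mul_assoc, c.mul_inv, one_mul]⟩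

variable [Fact p.Prime] {g : ZMod p}

theorem Xc_emod (hg : g ≠ 0) (i : ℤ) : Xc p n g i = Xc p n g (i % n) := by
  have hpow : g ^ i = g ^ (i % n) * (g ^ (i / n)) ^ n := by
    rw [← zpow_natCast (g ^ (i / n)), ← zpow_mul, ← zpow_add₀ hg, Int.emod_add_ediv_mul]
  rw [Xc, Xc, hpow, mul_smul, pow_smul_Hpow (zpow_ne_zero _ hg).isUnit]

theorem Xc_add_Xc (hg : g ≠ 0) (i j : ℤ) :
    Xc p n g i + Xc p n g j = g ^ i • (Xc p n g 0 + Xc p n g ((j - i) % n)) := by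
  rw [← Xc_emod hg, Xc, Xc, Xc, Xc, smul_add, zpow_zero, one_smul, smul_smul, ← zpow_add₀ hg,
    add_sub_cancel]

end Cosets

theorem Set.smul_set_compl_singleton_zero₀ {K : Type*} [GroupWithZero K] {a : K} (ha : a ≠ 0) :
    a • ({0}ᶜ : Set K) = {0}ᶜ := by
  rw [show a • ({0}ᶜ : Set K) = Units.mk0 a ha • ({0}ᶜ : Set K) from rfl, Set.smul_set_compl,
    Set.smul_set_singleton, smul_zero]

theorem isPrimitiveRoot_two_zmod37 : IsPrimitiveRoot (2 : ZMod 37) 36 :=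
  (IsPrimitiveRoot.iff (by norm_num)).mpr
    ⟨by decide, fun l hl0 hl => (by decide : ∀ l < 36, 0 < l → (2 : ZMod 37) ^ l ≠ 1) l hl hl0⟩

def quarticResidues37 : Finset (ZMod 37) := {1, 7, 9, 10, 12, 16, 26, 33, 34}

theorem Hpow_37_4 : Hpow 37 4 = (quarticResidues37 : Set (ZMod 37)) := by
  ext x
  simp only [Hpow, Set.mem_ofPred_eq, Finset.mem_coe]
  revert x
  decide

theorem Xc_37_4_two_natCast (k : ℕ) :
    Xc 37 4 2 k = ((2 : ZMod 37) ^ k • quarticResidues37 : Finset (ZMod 37)) := by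
  rw [Xc, zpow_natCast, Hpow_37_4, Finset.coe_smul_finset]

theorem quarticResidues37_add_smul (k : ℕ) (hk : k < 4) :
    quarticResidues37 + (2 : ZMod 37) ^ k • quarticResidues37 =
      if k = 2 then Finset.univ else Finset.univ.erase 0 := by
  revert k
  decide

theorem Xc_37_4_two_zero_add (k : ℤ) :
    Xc 37 4 2 0 + Xc 37 4 2 (k % 4) = if k % 4 = 2 then Set.univ else {0}ᶜ := by
  obtain ⟨m, hm⟩ : ∃ m : ℕ, k % 4 = m := ⟨(k % 4).toNat, by omega⟩
  have hm4 : m < 4 := by omega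
  have hm2 : (m : ℤ) = 2 ↔ m = 2 := by omega
  simp only [hm, hm2]
  rw [show Xc 37 4 2 0 = Xc 37 4 2 (0 : ℕ) from rfl, Xc_37_4_two_natCast,
    Xc_37_4_two_natCast, ← Finset.coe_add, pow_zero, one_smul, quarticResidues37_add_smul m hm4]
  split_ifs <;> simp [Set.compl_eq_univ_sdiff]

/-- The cosets of the index-4 subgroup of `𝔽_37ˣ` give a representation of relation
algebra `83_83`: every sumset `X_i + X_j` is all of `𝔽_37 \ {0}`, together with `0`
exactly when `j = i + 2 (mod 4)`. -/
theorem stmt_17 : ∃ g : ZMod 37, IsPrimitiveRoot g 36 ∧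
    ∀ i j : ℤ,
      ((j : ZMod 4) ≠ ((i + 2 : ℤ) : ZMod 4) →
        Xc 37 4 g i + Xc 37 4 g j = {(0 : ZMod 37)}ᶜ) ∧
      ((j : ZMod 4) = ((i + 2 : ℤ) : ZMod 4) →
        Xc 37 4 g i + Xc 37 4 g j = Set.univ) := by
  refine ⟨2, isPrimitiveRoot_two_zmod37, fun i j => ?_⟩
  have h2 : (2 : ZMod 37) ≠ 0 := by decide
  have hcond : (j : ZMod 4) = ((i + 2 : ℤ) : ZMod 4) ↔ (j - i) % 4 = 2 := by
    rw [ZMod.intCast_eq_intCast_iff']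
    omega
  rw [Xc_add_Xc h2, Nat.cast_ofNat, Xc_37_4_two_zero_add, Ne, hcond]
  split_ifs with h
  · exact ⟨absurd h, fun _ => Set.smul_set_univ₀ (zpow_ne_zero _ h2)⟩
  · exact ⟨fun _ => Set.smul_set_compl_singleton_zero₀ (zpow_ne_zero _ h2), fun h' => absurd h' h⟩
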